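/- arXiv:2404.03457 — 3 statements merged into one kernel-verified Lean document; each statement's English description precedes it below -/
import Mathlib

section
/- Let r and x be integers and d ≥ 1 an integer, and set ℓ₃ = gcd(3, d(d+1)). Then 3/ℓ₃, 10d(d+1)/ℓ₃, d(d+1)(3d²+3d-1)/ℓ₃ and ℓ₃(2d+1)/3 are all integers, and ∑_{i=-d}^{d} (x+ir)^5 = (ℓ₃(2d+1)/3) · x · ((3/ℓ₃)x⁴ + (10d(d+1)/ℓ₃)x²r² + (d(d+1)(3d²+3d-1)/ℓ₃)r⁴). -/
/-!
Pairing the terms `i` and `-i` kills the even powers of `i r`, so `3 ∑ (x + i r)⁵` is the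
polynomial `(2d+1) x (3x⁴ + 10d(d+1) x²r² + d(d+1)(3d²+3d-1) r⁴)`.
As `3` divides `d(d+1)(2d+1)`, either `3 ∣ d(d+1)`, and then `ℓ₃ = 3`, or `3 ∣ 2d+1`;
either way `3 ∣ ℓ₃(2d+1)`, so the factor `ℓ₃` can be moved from the second bracket to the first.
-/

open Finset

theorem Int.three_dvd_mul_add_one_or_three_dvd_two_mul_add_one (d : ℤ) :
    3 ∣ d * (d + 1) ∨ 3 ∣ 2 * d + 1 := by
  have key : ∀ a : ZMod 3, a * (a + 1) = 0 ∨ 2 * a + 1 = 0 := by decide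
  have hdvd (n : ℤ) : (n : ZMod 3) = 0 ↔ 3 ∣ n := ZMod.intCast_zmod_eq_zero_iff_dvd n 3
  rw [← hdvd, ← hdvd]
  push_cast
  exact key d

theorem Finset.sum_Icc_neg_add_one {M : Type*} [AddCommMonoid M] (f : ℤ → M) {d : ℤ}
    (hd : 0 ≤ d) :
    ∑ i ∈ Icc (-(d + 1)) (d + 1), f i =
      f (-(d + 1)) + (f (d + 1) + ∑ i ∈ Icc (-d) d, f i) := by
  have hIcc : Icc (-(d + 1)) (d + 1) = insert (-(d + 1)) (insert (d + 1) (Icc (-d) d)) := by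
    ext i
    simp only [mem_Icc, mem_insert]
    omega
  rw [hIcc, sum_insert (by simp only [mem_insert, mem_Icc]; omega),
    sum_insert (by simp only [mem_Icc]; omega)]

theorem three_mul_sum_Icc_pow_five {R : Type*} [CommRing R] (x r : R) {d : ℤ} (hd : 0 ≤ d) :
    3 * ∑ i ∈ Icc (-d) d, (x + i * r) ^ 5 =
      (2 * d + 1) * x * (3 * x ^ 4 + 10 * d * (d + 1) * x ^ 2 * r ^ 2
        + d * (d + 1) * (3 * d ^ 2 + 3 * d - 1) * r ^ 4) := by
  induction d, hd using Int.leInduction with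
  | base =>
    simp only [neg_zero, Icc_self, sum_singleton]
    push_cast
    ring
  | succ d hd ih =>
    rw [sum_Icc_neg_add_one _ hd, mul_add, mul_add, ih]
    push_cast
    ring

theorem Int.eq_ediv_mul_mul_quartic_ediv {k l m S x r a b c : ℤ} (hk : k ≠ 0)
    (hklm : k ∣ l * m) (ha : l ∣ a) (hb : l ∣ b) (hc : l ∣ c)
    (h : k * S = m * x * (a * x ^ 4 + b * x ^ 2 * r ^ 2 + c * r ^ 4)) :
    S = l * m / k * x * (a / l * x ^ 4 + b / l * x ^ 2 * r ^ 2 + c / l * r ^ 4) := by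
  refine mul_left_cancel₀ hk ?_
  calc k * S
      = m * x * (l * (a / l) * x ^ 4 + l * (b / l) * x ^ 2 * r ^ 2 + l * (c / l) * r ^ 4) := by
        rw [Int.mul_ediv_cancel' ha, Int.mul_ediv_cancel' hb, Int.mul_ediv_cancel' hc, h]
    _ = _ := by rw [← mul_assoc k, ← mul_assoc k, Int.mul_ediv_cancel' hklm]; ring

theorem sum_fifth_powers_factorization (d : ℤ) (hd : 1 ≤ d) (r x : ℤ)
    (l3 : ℤ) (hl3 : l3 = Int.gcd 3 (d*(d+1))) :
    (l3 ∣ 3 ∧ l3 ∣ 10*d*(d+1) ∧ l3 ∣ d*(d+1)*(3*d^2+3*d-1) ∧ (3 : ℤ) ∣ l3*(2*d+1)) ∧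
    ∑ i ∈ Finset.Icc (-d) d, (x + i*r)^5 =
      (l3*(2*d+1)/3) * x *
        ((3/l3)*x^4 + (10*d*(d+1)/l3)*x^2*r^2 + (d*(d+1)*(3*d^2+3*d-1)/l3)*r^4) := by
  have hl3_three : l3 ∣ 3 := hl3 ▸ Int.gcd_dvd_left _ _
  have hl3_mul : l3 ∣ d * (d + 1) := hl3 ▸ Int.gcd_dvd_right _ _
  have hl3_ten : l3 ∣ 10 * d * (d + 1) := by
    rw [mul_assoc]
    exact hl3_mul.mul_left 10
  have hl3_poly : l3 ∣ d * (d + 1) * (3 * d ^ 2 + 3 * d - 1) := hl3_mul.mul_right _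
  have hthree : (3 : ℤ) ∣ l3 * (2 * d + 1) := by
    rcases Int.three_dvd_mul_add_one_or_three_dvd_two_mul_add_one d with h | h
    · rw [hl3, Int.gcd_eq_left (by norm_num) h]
      exact dvd_mul_right _ _
    · exact h.mul_left _
  refine ⟨⟨hl3_three, hl3_ten, hl3_poly, hthree⟩, ?_⟩
  exact Int.eq_ediv_mul_mul_quartic_ediv three_ne_zero hthree hl3_three hl3_ten hl3_poly
    (by simpa only [Int.cast_id] using three_mul_sum_Icc_pow_five x r (d := d) (by omega))
end

section
/- Let r be a nonzero integer, p > 7 a prime, and suppose integers x, y with gcd(x,r) = 1 and (x,y) ≠ (0,0) satisfy (x-2r)^5 + (x-r)^5 + x^5 + (x+r)^5 + (x+2r)^5 = y^p. Set κ₂ = gcd(x,2), κ₅ = gcd(x,5), κ₁₇ = gcd(x,17). Then there exist nonzero coprime integers a, b such that 33·κ₂^{4p-5}·κ₅^{4p-4}·κ₁₇^{4p-6}·a^{4p} + (17/κ₁₇)·(5/κ₅)^{p-1}·b^p = (2/κ₂)·((5x² + 17r²)/κ₁₇)². -/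
/-!
The sum of the five fifth powers is `5 x Q` with `Q = x⁴ + 20x²r² + 34r⁴`. Any common prime
factor of `x` and `Q` divides `34 r⁴`, hence `34`, and divides `Q` only once because `34` is
squarefree. Writing `k = gcd(x, 170)`, `g = gcd(x, 34)` and `Q = g Q₁`, this makes `k x` and
`(5 / gcd(x, 5)) Q₁` coprime; their product is `5 x Q = y^p`, so for odd `p` both are `p`-th powers,
which gives `x = k^(p-1) a^p` and `Q = g (5 / gcd(x, 5))^(p-1) b^p`. The theorem is then the identity
`2 (5x² + 17r²)² = 33 x⁴ + 17 Q` divided by `κ₂ κ₁₇²`.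
-/

theorem Int.gcd_mul_eq_of_coprime (x : ℤ) {m n : ℕ} (h : m.Coprime n) :
    Int.gcd x (m * n) = Int.gcd x m * Int.gcd x n :=
  Nat.Coprime.gcd_mul x.natAbs h

theorem isCoprime_div_gcd {x n : ℤ} (hn : Squarefree n) : IsCoprime x (n / Int.gcd x n) := by
  have hg : (Int.gcd x n : ℤ) ∣ n := Int.gcd_dvd_right x n
  have hn0 : n ≠ 0 := hn.ne_zero
  refine isCoprime_of_prime_dvd ?_ fun q hq hqx hqe => ?_
  · rintro ⟨-, h⟩
    exact hn0 (by rw [← Int.ediv_mul_cancel hg, h, zero_mul])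
  · have hqg : q ∣ Int.gcd x n := Int.dvd_coe_gcd hqx (hqe.trans (Int.ediv_dvd_of_dvd hg))
    have hqq : q * q ∣ n := by
      rw [← Int.mul_ediv_cancel' hg]
      exact mul_dvd_mul hqg hqe
    exact hq.not_isUnit (hn q hqq)

theorem exists_eq_pow_pred_mul_pow {R : Type*} [CommMonoidWithZero R] [IsCancelMulZero R]
    [DecompositionMonoid R] [Nontrivial R]
    {k x c : R} {p : ℕ} (hk : Squarefree k) (hp : p ≠ 0) (h : k * x = c ^ p) :
    ∃ a, x = k ^ (p - 1) * a ^ p := by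
  obtain ⟨a, rfl⟩ := (hk.dvd_pow_iff_dvd hp).mp ⟨x, h.symm⟩
  refine ⟨a, mul_left_cancel₀ hk.ne_zero ?_⟩
  rw [h, mul_pow, ← mul_assoc, ← pow_succ', Nat.sub_add_cancel (Nat.one_le_iff_ne_zero.mpr hp)]

def quartic (x r : ℤ) : ℤ := x ^ 4 + 20 * x ^ 2 * r ^ 2 + 34 * r ^ 4

theorem sum_fifth_powers_eq (x r : ℤ) :
    (x - 2*r)^5 + (x - r)^5 + x^5 + (x + r)^5 + (x + 2*r)^5 = 5 * x * quartic x r := by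
  unfold quartic; ring

theorem quartic_pos {x : ℤ} (r : ℤ) (hx : x ≠ 0) : 0 < quartic x r := by
  unfold quartic; positivity

theorem dvd_34_of_dvd_quartic {x r d : ℤ} (hxr : IsCoprime x r) (hdx : d ∣ x ^ 2)
    (hd : d ∣ quartic x r) : d ∣ 34 := by
  have h : d ∣ 34 * r ^ 4 := by
    have e : 34 * r ^ 4 = quartic x r - x ^ 2 * (x ^ 2 + 20 * r ^ 2) := by unfold quartic; ring
    rw [e]
    exact dvd_sub hd (dvd_mul_of_dvd_left hdx _)
  exact ((hxr.pow (m := 2) (n := 4)).of_isCoprime_of_dvd_left hdx).dvd_of_dvd_mul_right h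

theorem isCoprime_of_quartic_eq_gcd_mul {x r Q₁ : ℤ} (hxr : IsCoprime x r) (hx : x ≠ 0)
    (hQ : quartic x r = Int.gcd x 34 * Q₁) : IsCoprime x Q₁ := by
  refine isCoprime_of_prime_dvd (fun h => hx h.1) fun q hq hqx hqQ₁ => ?_
  have hqx2 : q ∣ x ^ 2 := dvd_pow hqx two_ne_zero
  have hq34 : q ∣ 34 := dvd_34_of_dvd_quartic hxr hqx2 (hQ ▸ hqQ₁.mul_left _)
  have hqq : q * q ∣ quartic x r := hQ ▸ mul_dvd_mul (Int.dvd_coe_gcd hqx hq34) hqQ₁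
  have hqq34 : q * q ∣ 34 :=
    dvd_34_of_dvd_quartic hxr (by rw [sq]; exact mul_dvd_mul hqx hqx) hqq
  exact hq.not_isUnit (Int.squarefree_natCast.mpr (by decide +kernel) q hqq34)

theorem exists_pow_of_five_mul_quartic_eq_pow {x r y : ℤ} {p : ℕ} (hp : Odd p)
    (hxr : IsCoprime x r) (hx : x ≠ 0) (h : 5 * x * quartic x r = y ^ p) :
    ∃ a b : ℤ, a ≠ 0 ∧ b ≠ 0 ∧ IsCoprime a b ∧
      x = (Int.gcd x 34 * Int.gcd x 5 : ℤ) ^ (p - 1) * a ^ p ∧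
      quartic x r = Int.gcd x 34 * (5 / Int.gcd x 5) ^ (p - 1) * b ^ p := by
  have hk : (Int.gcd x 170 : ℤ) = Int.gcd x 34 * Int.gcd x 5 := by
    rw [show (170 : ℤ) = (34 : ℕ) * (5 : ℕ) by rfl, Int.gcd_mul_eq_of_coprime x (by norm_num)]
    push_cast; rfl
  set k : ℤ := ((Int.gcd x 170 : ℕ) : ℤ)
  set e : ℤ := 5 / ((Int.gcd x 5 : ℕ) : ℤ)
  obtain ⟨Q₁, hQ₁⟩ : (Int.gcd x 34 : ℤ) ∣ quartic x r := by
    have h34 : quartic x r = x * (x ^ 3 + 20 * x * r ^ 2) + 34 * r ^ 4 := by unfold quartic; ring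
    rw [h34]
    exact dvd_add ((Int.gcd_dvd_left x 34).mul_right _) ((Int.gcd_dvd_right x 34).mul_right _)
  have he : (Int.gcd x 5 : ℤ) * e = 5 := Int.mul_ediv_cancel' (Int.gcd_dvd_right x 5)
  have hksq : Squarefree k :=
    Squarefree.squarefree_of_dvd (Int.gcd_dvd_right x 170)
      (Int.squarefree_natCast (n := 170) |>.mpr (by decide +kernel))
  have hesq : Squarefree e :=
    Squarefree.squarefree_of_dvd ⟨_, he.symm.trans (mul_comm _ _)⟩
      (Int.prime_iff_natAbs_prime.mpr (by norm_num)).squarefree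
  have hcop : IsCoprime (k * x) (e * Q₁) := by
    have hx' : IsCoprime x (e * Q₁) :=
      (isCoprime_div_gcd (Int.prime_iff_natAbs_prime.mpr (by norm_num)).squarefree).mul_right
        (isCoprime_of_quartic_eq_gcd_mul hxr hx hQ₁)
    exact (hx'.of_isCoprime_of_dvd_left (Int.gcd_dvd_left x 170)).mul_left hx'
  have hprod : k * x * (e * Q₁) = y ^ p := by
    rw [← h, hQ₁, hk]
    linear_combination (Int.gcd x 34 * x * Q₁) * he
  obtain ⟨c, hc⟩ := Int.eq_pow_of_mul_eq_pow_odd_left hcop hp hprod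
  obtain ⟨d, hd⟩ := Int.eq_pow_of_mul_eq_pow_odd_right hcop hp hprod
  obtain ⟨a, hxa⟩ := exists_eq_pow_pred_mul_pow hksq hp.pos.ne' hc
  rw [hk] at hxa
  obtain ⟨b, hQb⟩ := exists_eq_pow_pred_mul_pow hesq hp.pos.ne' hd
  have hQ₁0 : Q₁ ≠ 0 := by
    rintro rfl
    exact (quartic_pos r hx).ne' (by rw [hQ₁, mul_zero])
  refine ⟨a, b, ?_, ?_, ?_, hxa, by rw [hQ₁, hQb, mul_assoc]⟩
  · rintro rfl
    exact hx (by rw [hxa, zero_pow hp.pos.ne', mul_zero])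
  · rintro rfl
    exact hQ₁0 (by rw [hQb, zero_pow hp.pos.ne', mul_zero])
  · refine (hcop.of_isCoprime_of_dvd_left ?_).of_isCoprime_of_dvd_right ?_
    · exact ((dvd_pow_self a hp.pos.ne').trans (Dvd.intro_left _ hxa.symm)).mul_left k
    · exact ((dvd_pow_self b hp.pos.ne').trans (Dvd.intro_left _ hQb.symm)).mul_left e

theorem two_mul_sq_eq_quartic (x r : ℤ) :
    2 * (5 * x ^ 2 + 17 * r ^ 2) ^ 2 = 33 * x ^ 4 + 17 * quartic x r := by
  unfold quartic; ring

theorem descent_equation {p : ℕ} (hp : 2 ≤ p) {x r a b κ₂ κ₅ κ₁₇ e j₂ j₁₇ z : ℤ}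
    (h₂ : κ₂ * j₂ = 2) (h₁₇ : κ₁₇ * j₁₇ = 17) (hz : κ₁₇ * z = 5 * x ^ 2 + 17 * r ^ 2)
    (hx : x = (κ₂ * κ₁₇ * κ₅) ^ (p - 1) * a ^ p)
    (hQ : quartic x r = κ₂ * κ₁₇ * e ^ (p - 1) * b ^ p) :
    33 * κ₂^(4*p-5) * κ₅^(4*p-4) * κ₁₇^(4*p-6) * a^(4*p) + j₁₇ * e^(p-1) * b^p = j₂ * z^2 := by
  obtain ⟨n, rfl⟩ : ∃ n, p = n + 2 := ⟨p - 2, by omega⟩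
  have hκ : κ₂ * κ₁₇ ^ 2 ≠ 0 := by
    refine mul_ne_zero ?_ (pow_ne_zero 2 ?_) <;> rintro rfl <;> simp at h₂ h₁₇
  simp only [show 4 * (n + 2) - 5 = 4 * n + 3 by omega, show 4 * (n + 2) - 4 = 4 * n + 4 by omega,
    show 4 * (n + 2) - 6 = 4 * n + 2 by omega, show n + 2 - 1 = n + 1 by omega] at hx hQ ⊢
  have hx4 : x ^ 4 = (κ₂ * κ₁₇ * κ₅) ^ (4 * n + 4) * a ^ (4 * n + 8) := by rw [hx]; ring
  apply mul_left_cancel₀ hκ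
  linear_combination -33 * hx4 - 17 * hQ + (κ₂ * κ₁₇ * e ^ (n + 1) * b ^ (n + 2)) * h₁₇
    - two_mul_sq_eq_quartic x r - κ₁₇ ^ 2 * z ^ 2 * h₂ - 2 * (κ₁₇ * z + 5 * x ^ 2 + 17 * r ^ 2) * hz

theorem ternary_equation_d_eq_two_general (r : ℤ) (p : ℕ) (hp : p.Prime)
    (hp7 : 7 < p) (x y : ℤ) (hxr : Int.gcd x r = 1) (hnt : (x, y) ≠ (0, 0))
    (heq : (x - 2*r)^5 + (x - r)^5 + x^5 + (x + r)^5 + (x + 2*r)^5 = y^p)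
    (κ₂ κ₅ κ₁₇ : ℤ) (hκ₂ : κ₂ = Int.gcd x 2) (hκ₅ : κ₅ = Int.gcd x 5)
    (hκ₁₇ : κ₁₇ = Int.gcd x 17) :
    ∃ a b : ℤ, a ≠ 0 ∧ b ≠ 0 ∧ IsCoprime a b ∧
      33 * κ₂^(4*p-5) * κ₅^(4*p-4) * κ₁₇^(4*p-6) * a^(4*p) +
        (17/κ₁₇) * (5/κ₅)^(p-1) * b^p =
      (2/κ₂) * ((5*x^2 + 17*r^2)/κ₁₇)^2 := by
  have h5xQ : 5 * x * quartic x r = y ^ p := by rw [← heq, sum_fifth_powers_eq]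
  have hx : x ≠ 0 := by
    rintro rfl
    have hy : y = 0 := (pow_eq_zero_iff hp.ne_zero).mp (by rw [← h5xQ]; ring)
    exact hnt (by rw [hy])
  obtain ⟨a, b, ha, hb, hab, hxa, hQb⟩ := exists_pow_of_five_mul_quartic_eq_pow
    (hp.odd_of_ne_two (by omega)) (Int.isCoprime_iff_gcd_eq_one.mpr hxr) hx h5xQ
  have h170 : (Int.gcd x 170 : ℤ) = κ₂ * κ₅ * κ₁₇ := by
    rw [hκ₂, hκ₅, hκ₁₇, show (170 : ℤ) = (10 : ℕ) * (17 : ℕ) by rfl,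
      Int.gcd_mul_eq_of_coprime x (by norm_num), show ((10 : ℕ) : ℤ) = (2 : ℕ) * (5 : ℕ) by rfl,
      Int.gcd_mul_eq_of_coprime x (by norm_num)]
    push_cast; rfl
  have h34 : (Int.gcd x 34 : ℤ) = κ₂ * κ₁₇ := by
    rw [hκ₂, hκ₁₇, show (34 : ℤ) = (2 : ℕ) * (17 : ℕ) by rfl,
      Int.gcd_mul_eq_of_coprime x (by norm_num)]
    push_cast; rfl
  have hκ₁₇x : κ₁₇ ∣ x := hκ₁₇ ▸ Int.gcd_dvd_left x 17
  have hκ₁₇17 : κ₁₇ ∣ 17 := hκ₁₇ ▸ Int.gcd_dvd_right x 17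
  refine ⟨a, b, ha, hb, hab, descent_equation (by omega) ?_ (Int.mul_ediv_cancel' hκ₁₇17) ?_
    (hκ₅ ▸ h34 ▸ hxa) (hκ₅ ▸ h34 ▸ hQb)⟩
  · exact Int.mul_ediv_cancel' (hκ₂ ▸ Int.gcd_dvd_right x 2)
  · exact Int.mul_ediv_cancel' (dvd_add ((dvd_pow hκ₁₇x two_ne_zero).mul_left 5)
      (hκ₁₇17.mul_right _))

theorem ternary_equation_d_eq_two (r : ℤ) (hr : r ≠ 0) (p : ℕ) (hp : p.Prime)
    (hp7 : 7 < p) (x y : ℤ) (hxr : Int.gcd x r = 1) (hnt : (x, y) ≠ (0, 0))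
    (heq : (x - 2*r)^5 + (x - r)^5 + x^5 + (x + r)^5 + (x + 2*r)^5 = y^p)
    (κ₂ κ₅ κ₁₇ : ℤ) (hκ₂ : κ₂ = Int.gcd x 2) (hκ₅ : κ₅ = Int.gcd x 5)
    (hκ₁₇ : κ₁₇ = Int.gcd x 17) :
    ∃ a b : ℤ, a ≠ 0 ∧ b ≠ 0 ∧ IsCoprime a b ∧
      33 * κ₂^(4*p-5) * κ₅^(4*p-4) * κ₁₇^(4*p-6) * a^(4*p) +
        (17/κ₁₇) * (5/κ₅)^(p-1) * b^p =
      (2/κ₂) * ((5*x^2 + 17*r^2)/κ₁₇)^2 :=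
  ternary_equation_d_eq_two_general r p hp hp7 x y hxr hnt heq κ₂ κ₅ κ₁₇ hκ₂ hκ₅ hκ₁₇
end

section
/- Let r be a nonzero integer, p > 19 a prime, and suppose integers x, y with gcd(x,r) = 1 and (x,y) ≠ (0,0) satisfy (x-3r)^5 + (x-2r)^5 + (x-r)^5 + x^5 + (x+r)^5 + (x+2r)^5 + (x+3r)^5 = y^p. Set κ₂ = gcd(x,2), κ₅ = gcd(x,5), κ₇ = gcd(x,7). Then there exist nonzero coprime integers a, b such that κ₂^{4p-10}·κ₅^{4p-5}·κ₇^{4p-10}·13·a^{4p} + (7b/κ₇)^p = (5/κ₅)·((2x² + 14r²)/(κ₂·κ₇))². -/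
/-!
The seven fifth powers sum to 7x(x⁴ + 40x²r² + 140r⁴). As gcd(x, r) = 1, a prime dividing both
x and 7(x⁴ + 40x²r² + 140r⁴) divides 980 = 2²·5·7², and κ = κ₂²κ₅κ₇² is exactly the part of 980
that such primes take, so x·κ and V = 7(x⁴ + 40x²r² + 140r⁴)/κ are coprime. Since p is odd, both
are p-th powers, x·κ = (κ₂κ₅κ₇a)^p and V = (7b/κ₇)^p, and the claimed equation is the identity
13x⁴ + 7(x⁴ + 40x²r² + 140r⁴) = 5(2x² + 14r²)² divided by κ.
-/

theorem sum_seven_fifth_powers (x r : ℤ) :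
    (x - 3*r)^5 + (x - 2*r)^5 + (x - r)^5 + x^5 + (x + r)^5 + (x + 2*r)^5 + (x + 3*r)^5 =
      7 * x * (x^4 + 40*x^2*r^2 + 140*r^4) := by
  ring

theorem Int.gcd_seventy_eq_mul (x : ℤ) :
    (Int.gcd x 70 : ℤ) = Int.gcd x 2 * Int.gcd x 5 * Int.gcd x 7 := by
  have h : x.natAbs.gcd (2 * 5 * 7) = x.natAbs.gcd 2 * x.natAbs.gcd 5 * x.natAbs.gcd 7 := by
    rw [Nat.Coprime.gcd_mul _ (by norm_num), Nat.Coprime.gcd_mul _ (by norm_num)]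
  exact_mod_cast h

theorem squarefree_of_dvd_seventy {d : ℤ} (h : d ∣ 70) : Squarefree d :=
  (Int.squarefree_natCast.mpr (by decide +kernel : Squarefree 70)).squarefree_of_dvd h

theorem Int.isCoprime_div_gcd_of_prime {q : ℤ} (hq : Prime q) (hq0 : 0 ≤ q) (x : ℤ) :
    IsCoprime x (q / Int.gcd x q) := by
  by_cases h : q ∣ x
  · rw [Int.gcd_eq_right hq0 h, Int.ediv_self hq.ne_zero]
    exact isCoprime_one_right
  · have hcop : IsCoprime q x := hq.coprime_iff_not_dvd.mpr h
    rw [Int.isCoprime_iff_gcd_eq_one.mp hcop.symm, Nat.cast_one, Int.ediv_one]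
    exact hcop.symm

theorem exists_coprime_cofactor {x r κ₂ κ₅ κ₇ : ℤ} (hxr : Int.gcd x r = 1)
    (hκ₂ : κ₂ = Int.gcd x 2) (hκ₅ : κ₅ = Int.gcd x 5) (hκ₇ : κ₇ = Int.gcd x 7) :
    ∃ V, κ₂^2 * κ₅ * κ₇^2 * V = 7 * (x^4 + 40*x^2*r^2 + 140*r^4) ∧
      IsCoprime (x * (κ₂^2 * κ₅ * κ₇^2)) V ∧ 7 / κ₇ ∣ V := by
  obtain ⟨t, ht⟩ : κ₂ * κ₅ * κ₇ ∣ x := by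
    rw [hκ₂, hκ₅, hκ₇, ← Int.gcd_seventy_eq_mul]
    exact Int.gcd_dvd_left _ _
  obtain ⟨s, hs⟩ : κ₂ ∣ x^2 + 40*r^2 := by
    have h2d : κ₂ ∣ 2 := hκ₂ ▸ Int.gcd_dvd_right _ _
    exact dvd_add (dvd_pow (hκ₂ ▸ Int.gcd_dvd_left _ _) two_ne_zero)
      (dvd_mul_of_dvd_left (h2d.trans (by norm_num)) _)
  have h2 : κ₂ * (2 / κ₂) = 2 := Int.mul_ediv_cancel' (hκ₂ ▸ Int.gcd_dvd_right _ _)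
  have h5 : κ₅ * (5 / κ₅) = 5 := Int.mul_ediv_cancel' (hκ₅ ▸ Int.gcd_dvd_right _ _)
  have h7 : κ₇ * (7 / κ₇) = 7 := Int.mul_ediv_cancel' (hκ₇ ▸ Int.gcd_dvd_right _ _)
  -- V = 980r⁴/κ + 7x²(x² + 40r²)/κ: the first term is coprime to x, the second a multiple of x
  refine ⟨7 / κ₇ * ((2 / κ₂)^2 * (5 / κ₅) * (7 / κ₇) * r^4 + x * (s * t)), ?_, ?_,
    dvd_mul_right _ _⟩
  · calc κ₂^2 * κ₅ * κ₇^2 * (7 / κ₇ * ((2 / κ₂)^2 * (5 / κ₅) * (7 / κ₇) * r^4 + x * (s * t)))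
        = (κ₂ * (2 / κ₂))^2 * (κ₅ * (5 / κ₅)) * (κ₇ * (7 / κ₇))^2 * r^4
          + (κ₇ * (7 / κ₇)) * (κ₂ * s) * x * (κ₂ * κ₅ * κ₇ * t) := by ring
      _ = 7 * (x^4 + 40*x^2*r^2 + 140*r^4) := by rw [h2, h5, h7, ← hs, ← ht]; ring
  · have hx2 : IsCoprime x (2 / κ₂) := hκ₂ ▸ Int.isCoprime_div_gcd_of_prime Int.prime_two
      (by norm_num) x
    have hx5 : IsCoprime x (5 / κ₅) := hκ₅ ▸ Int.isCoprime_div_gcd_of_prime (by norm_num)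
      (by norm_num) x
    have hx7 : IsCoprime x (7 / κ₇) := hκ₇ ▸ Int.isCoprime_div_gcd_of_prime (by norm_num)
      (by norm_num) x
    have hxA : IsCoprime x ((2 / κ₂)^2 * (5 / κ₅) * (7 / κ₇) * r^4) :=
      ((hx2.pow_right.mul_right hx5).mul_right hx7).mul_right
        (Int.isCoprime_iff_gcd_eq_one.mpr hxr).pow_right
    have hxV : IsCoprime x (7 / κ₇ * ((2 / κ₂)^2 * (5 / κ₅) * (7 / κ₇) * r^4 + x * (s * t))) :=
      hx7.mul_right (hxA.add_mul_left_right _)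
    -- κ₂²κ₅κ₇² divides x², so x·κ₂²κ₅κ₇² divides x³
    refine (hxV.pow_left (m := 3)).of_isCoprime_of_dvd_left ⟨κ₅ * t^2, ?_⟩
    rw [ht]
    ring

theorem gcd_two_mul_gcd_seven_dvd {x r κ₂ κ₇ : ℤ} (hκ₂ : κ₂ = Int.gcd x 2)
    (hκ₇ : κ₇ = Int.gcd x 7) : κ₂ * κ₇ ∣ 2*x^2 + 14*r^2 := by
  rw [show 2*x^2 + 14*r^2 = 2 * (x^2 + 7*r^2) by ring]
  exact mul_dvd_mul (hκ₂ ▸ Int.gcd_dvd_right _ _) (dvd_add (dvd_pow (hκ₇ ▸ Int.gcd_dvd_left _ _)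
    two_ne_zero) (dvd_mul_of_dvd_left (hκ₇ ▸ Int.gcd_dvd_right _ _) _))

theorem exists_pow_factorization {p : ℕ} (hp : Odd p) {x y r κ₂ κ₅ κ₇ : ℤ}
    (hxr : Int.gcd x r = 1) (hκ₂ : κ₂ = Int.gcd x 2) (hκ₅ : κ₅ = Int.gcd x 5)
    (hκ₇ : κ₇ = Int.gcd x 7) (h : 7 * x * (x^4 + 40*x^2*r^2 + 140*r^4) = y^p) :
    ∃ a b : ℤ, x * (κ₂^2 * κ₅ * κ₇^2) = (κ₂ * κ₅ * κ₇ * a)^p ∧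
      κ₂^2 * κ₅ * κ₇^2 * (7 / κ₇ * b)^p = 7 * (x^4 + 40*x^2*r^2 + 140*r^4) ∧ IsCoprime a b := by
  obtain ⟨V, hkV, hcop, h7V⟩ := exists_coprime_cofactor hxr hκ₂ hκ₅ hκ₇
  have hy : x * (κ₂^2 * κ₅ * κ₇^2) * V = y^p := by rw [mul_assoc, hkV, ← h]; ring
  have hp0 : p ≠ 0 := hp.pos.ne'
  obtain ⟨u, hu⟩ := Int.eq_pow_of_mul_eq_pow_odd_left hcop hp hy
  obtain ⟨v, rfl⟩ := Int.eq_pow_of_mul_eq_pow_odd_right hcop hp hy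
  have hg : κ₂ * κ₅ * κ₇ = Int.gcd x 70 := by rw [hκ₂, hκ₅, hκ₇, Int.gcd_seventy_eq_mul]
  obtain ⟨a, rfl⟩ : κ₂ * κ₅ * κ₇ ∣ u := by
    rw [← (squarefree_of_dvd_seventy (hg ▸ Int.gcd_dvd_right _ _)).dvd_pow_iff_dvd hp0, ← hu]
    exact dvd_mul_of_dvd_left (hg ▸ Int.gcd_dvd_left _ _) _
  have h7 : 7 / κ₇ ∣ 70 :=
    (Dvd.intro_left _ (Int.mul_ediv_cancel' (hκ₇ ▸ Int.gcd_dvd_right _ _))).trans (by norm_num)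
  obtain ⟨b, rfl⟩ : 7 / κ₇ ∣ v := ((squarefree_of_dvd_seventy h7).dvd_pow_iff_dvd hp0).mp h7V
  have hab : IsCoprime (κ₂ * κ₅ * κ₇ * a) (7 / κ₇ * b) := by
    rwa [← IsCoprime.pow_iff hp.pos hp.pos, ← hu]
  exact ⟨a, b, hu, hkV, hab.of_mul_left_right.of_mul_right_right⟩

theorem eq_five_div_mul_sq_of_mul_eq_pow {p : ℕ} (hp : 3 ≤ p) {x r a V κ₂ κ₅ κ₇ : ℤ}
    (h2 : κ₂ ≠ 0) (h5 : κ₅ ≠ 0) (h7 : κ₇ ≠ 0) (h5d : κ₅ ∣ 5) (h27 : κ₂ * κ₇ ∣ 2*x^2 + 14*r^2)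
    (hx : x * (κ₂^2 * κ₅ * κ₇^2) = (κ₂ * κ₅ * κ₇ * a)^p)
    (hV : κ₂^2 * κ₅ * κ₇^2 * V = 7 * (x^4 + 40*x^2*r^2 + 140*r^4)) :
    κ₂^(4*p-10) * κ₅^(4*p-5) * κ₇^(4*p-10) * 13 * a^(4*p) + V =
      (5 / κ₅) * ((2*x^2 + 14*r^2) / (κ₂ * κ₇))^2 := by
  obtain ⟨m, rfl⟩ : ∃ m, p = m + 3 := ⟨p - 3, by omega⟩
  obtain ⟨c, hc⟩ := h5d
  obtain ⟨W, hW⟩ := h27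
  have hk : κ₂^2 * κ₅ * κ₇^2 ≠ 0 := by positivity
  have hx4 : x^4 = κ₂^(4*m+4) * κ₅^(4*m+8) * κ₇^(4*m+4) * a^(4*(m+3)) := by
    rw [mul_right_cancel₀ hk (hx.trans (by ring) :
      x * (κ₂^2 * κ₅ * κ₇^2) = κ₂^(m+1) * κ₅^(m+2) * κ₇^(m+1) * a^(m+3) * (κ₂^2 * κ₅ * κ₇^2))]
    ring
  rw [hW, Int.mul_ediv_cancel_left _ (mul_ne_zero h2 h7), hc, Int.mul_ediv_cancel_left _ h5,
    show 4 * (m+3) - 10 = 4*m + 2 by omega, show 4 * (m+3) - 5 = 4*m + 7 by omega]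
  apply mul_right_cancel₀ hk
  linear_combination hV - 13 * hx4 + 5 * (2*x^2 + 14*r^2 + κ₂*κ₇*W) * hW + (κ₂*κ₇*W)^2 * hc

theorem ternary_equation_d_eq_three_general (r : ℤ) (p : ℕ) (hp : p.Prime)
    (hp19 : 19 < p) (x y : ℤ) (hxr : Int.gcd x r = 1) (hnt : (x, y) ≠ (0, 0))
    (heq : (x - 3*r)^5 + (x - 2*r)^5 + (x - r)^5 + x^5 + (x + r)^5 + (x + 2*r)^5 +
      (x + 3*r)^5 = y^p)
    (κ₂ κ₅ κ₇ : ℤ) (hκ₂ : κ₂ = Int.gcd x 2) (hκ₅ : κ₅ = Int.gcd x 5)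
    (hκ₇ : κ₇ = Int.gcd x 7) :
    ∃ a b : ℤ, a ≠ 0 ∧ b ≠ 0 ∧ IsCoprime a b ∧
      κ₂^(4*p-10) * κ₅^(4*p-5) * κ₇^(4*p-10) * 13 * a^(4*p) + (7*b/κ₇)^p =
        (5/κ₅) * ((2*x^2 + 14*r^2)/(κ₂*κ₇))^2 := by
  rw [sum_seven_fifth_powers] at heq
  have hx : x ≠ 0 := by
    rintro rfl
    exact hnt (Prod.ext rfl ((pow_eq_zero_iff hp.ne_zero).mp (by rw [← heq]; ring)))
  have h2 : 0 < κ₂ := hκ₂ ▸ mod_cast Int.gcd_pos_of_ne_zero_right x two_ne_zero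
  have h5 : 0 < κ₅ := hκ₅ ▸ mod_cast Int.gcd_pos_of_ne_zero_right x (by norm_num)
  have h7 : 0 < κ₇ := hκ₇ ▸ mod_cast Int.gcd_pos_of_ne_zero_right x (by norm_num)
  obtain ⟨a, b, hu, hv, hab⟩ :=
    exists_pow_factorization (hp.odd_of_ne_two (by omega)) hxr hκ₂ hκ₅ hκ₇ heq
  refine ⟨a, b, ?_, ?_, hab, ?_⟩
  · rintro rfl
    exact mul_ne_zero hx (by positivity) (hu.trans (by simp [hp.ne_zero]))
  · rintro rfl
    have hQ : 0 < 7 * (x^4 + 40*x^2*r^2 + 140*r^4) := by positivity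
    exact hQ.ne' (by rw [← hv]; simp [hp.ne_zero])
  · rw [Int.mul_ediv_assoc' b (hκ₇ ▸ Int.gcd_dvd_right _ _)]
    exact eq_five_div_mul_sq_of_mul_eq_pow (by omega) h2.ne' h5.ne' h7.ne'
      (hκ₅ ▸ Int.gcd_dvd_right _ _) (gcd_two_mul_gcd_seven_dvd hκ₂ hκ₇) hu hv

theorem ternary_equation_d_eq_three (r : ℤ) (hr : r ≠ 0) (p : ℕ) (hp : p.Prime)
    (hp19 : 19 < p) (x y : ℤ) (hxr : Int.gcd x r = 1) (hnt : (x, y) ≠ (0, 0))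
    (heq : (x - 3*r)^5 + (x - 2*r)^5 + (x - r)^5 + x^5 + (x + r)^5 + (x + 2*r)^5 +
      (x + 3*r)^5 = y^p)
    (κ₂ κ₅ κ₇ : ℤ) (hκ₂ : κ₂ = Int.gcd x 2) (hκ₅ : κ₅ = Int.gcd x 5)
    (hκ₇ : κ₇ = Int.gcd x 7) :
    ∃ a b : ℤ, a ≠ 0 ∧ b ≠ 0 ∧ IsCoprime a b ∧
      κ₂^(4*p-10) * κ₅^(4*p-5) * κ₇^(4*p-10) * 13 * a^(4*p) + (7*b/κ₇)^p =
        (5/κ₅) * ((2*x^2 + 14*r^2)/(κ₂*κ₇))^2 :=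
  ternary_equation_d_eq_three_general r p hp hp19 x y hxr hnt heq κ₂ κ₅ κ₇ hκ₂ hκ₅ hκ₇
end
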